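/- Jarzynski-type identity over minimal paths: for a finite strongly connected reversible graph G with reference vertex 1, ∑_{m ∈ M(i,1)} Pr(m) · exp(-S(m)) = ρ_i(G), where Pr(m) = ∑_{T ∈ Θ_1, T_i = m} Pr_{Θ_1}(T) and ρ_i(G) = (∑_{T ∈ Θ_i} q(T)) / (∑_{T ∈ Θ_1} q(T)). In particular the weighted average ∑_m Pr(m) e^{-S(m)} is proportional to the steady-state probability of state i. -/

import Mathlib

/-!
Grouping the trees of `Θ₁` by their path `T_i` turns the left-hand side into
`∑_{T ∈ Θ₁} q(T) e^{-S(T_i)} / q(Θ₁)`. Reversing the edges of `T` along `T_i` is a bijection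
`Φ : Θ₁ → Θ_i` (it is its own inverse), and since `e^{-S(T_i)}` is the ratio of the backward to
the forward labels along `T_i`, reversibility gives `q(T) e^{-S(T_i)} = q(Φ T)`.
-/

open Finset

attribute [local instance] Classical.propDecidable

/-- `i → j` is an edge of the graph when its label is positive. -/
def IsEdge {n : ℕ} (ℓ : Fin n → Fin n → ℝ) (i j : Fin n) : Prop := 0 < ℓ i j

/-- Strong connectivity: any two vertices are joined by a directed path of edges. -/
def StronglyConnected {n : ℕ} (ℓ : Fin n → Fin n → ℝ) : Prop :=
  ∀ i j : Fin n, Relation.ReflTransGen (IsEdge ℓ) i j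

/-- Reversibility: `i → j` is an edge iff `j → i` is. -/
def Reversible {n : ℕ} (ℓ : Fin n → Fin n → ℝ) : Prop :=
  ∀ i j : Fin n, 0 < ℓ i j ↔ 0 < ℓ j i

/-- The Laplacian matrix: `L j i = ℓ i j` off the diagonal,
`L i i = -∑_{k ≠ i} ℓ i k`. -/
noncomputable def LaplacianMatrix {n : ℕ} (ℓ : Fin n → Fin n → ℝ) :
    Matrix (Fin n) (Fin n) ℝ :=
  fun j i => if j = i then -∑ k ∈ univ.filter (· ≠ i), ℓ i k else ℓ i j

/-- A spanning tree rooted at `r`, encoded as a parent map `t`: the root is fixed,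
every other vertex has a positively-labelled edge to its parent, and iterating
the parent map from any vertex reaches the root. -/
def IsSpanningTree {n : ℕ} (ℓ : Fin n → Fin n → ℝ) (r : Fin n)
    (t : Fin n → Fin n) : Prop :=
  t r = r ∧ (∀ v, v ≠ r → 0 < ℓ v (t v)) ∧ ∀ v, ∃ k, t^[k] v = r

/-- `Θ_r`: the set of spanning trees rooted at `r`. -/
noncomputable def Trees {n : ℕ} (ℓ : Fin n → Fin n → ℝ) (r : Fin n) :
    Finset (Fin n → Fin n) :=
  univ.filter (IsSpanningTree ℓ r)

/-- `q(T)`: the product of the edge labels over the edges of the tree. -/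
noncomputable def treeWeight {n : ℕ} (ℓ : Fin n → Fin n → ℝ) (r : Fin n)
    (t : Fin n → Fin n) : ℝ :=
  ∏ v ∈ univ.filter (· ≠ r), ℓ v (t v)

/-- A directed path from `i` to `j`, as the list of visited vertices. -/
def IsPathFrom {n : ℕ} (ℓ : Fin n → Fin n → ℝ) (i j : Fin n)
    (p : List (Fin n)) : Prop :=
  p.Chain' (IsEdge ℓ) ∧ p.head? = some i ∧ p.getLast? = some j

/-- A minimal (self-avoiding) path from `i` to `j`: all vertices distinct. -/
def IsMinPathFrom {n : ℕ} (ℓ : Fin n → Fin n → ℝ) (i j : Fin n)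
    (p : List (Fin n)) : Prop :=
  IsPathFrom ℓ i j p ∧ p.Nodup

/-- `S(P)`: the action / entropy change of a path, the sum of
`log (ℓ(a→b)/ℓ(b→a))` over its consecutive pairs `a → b`. -/
noncomputable def pathAction {n : ℕ} (ℓ : Fin n → Fin n → ℝ)
    (p : List (Fin n)) : ℝ :=
  ((p.zip p.tail).map (fun e => Real.log (ℓ e.1 e.2 / ℓ e.2 e.1))).sum

/-- `q(P)`: the product of the labels over the edges of a path. -/
noncomputable def pathWeight {n : ℕ} (ℓ : Fin n → Fin n → ℝ)
    (p : List (Fin n)) : ℝ :=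
  ((p.zip p.tail).map (fun e => ℓ e.1 e.2)).prod

/-- The path from `i` to the root `r` along the parent map `t` (fuel `k`). -/
def treePathAux {n : ℕ} (t : Fin n → Fin n) (r : Fin n) :
    ℕ → Fin n → List (Fin n)
  | 0, i => [i]
  | k + 1, i => if i = r then [i] else i :: treePathAux t r k (t i)

/-- `T_i`: the unique path from `i` to the root `r` on the spanning tree `t`. -/
def treePath {n : ℕ} (t : Fin n → Fin n) (r : Fin n) (i : Fin n) :
    List (Fin n) :=
  treePathAux t r n i

/-- The cycle condition: `S(C) = 0` for every directed cycle `C`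
(a directed path whose first and last vertices agree). -/
def CycleCondition {n : ℕ} (ℓ : Fin n → Fin n → ℝ) : Prop :=
  ∀ p : List (Fin n), p.Chain' (IsEdge ℓ) → p.head? = p.getLast? →
    pathAction ℓ p = 0

/-- The tree-reversal map `Φ_{r,j}`: given a tree `t` rooted at `r`, reverse the
edges on the unique tree path from `j` to `r`, obtaining a tree rooted at `j`. -/
def reverseTree {n : ℕ} (t : Fin n → Fin n) (r j : Fin n) : Fin n → Fin n :=
  fun v =>
    (((treePath t r j).zip (treePath t r j).tail).find? (fun e => e.2 == v)).elim
      (if v = j then j else t v) (fun e => e.1)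

section HitTime

variable {α : Type*} {f : α → α} {r x : α}

noncomputable def hitTime (f : α → α) (r x : α) : ℕ :=
  if h : ∃ k, f^[k] x = r then Nat.find h else 0

theorem iterate_hitTime (h : ∃ k, f^[k] x = r) : f^[hitTime f r x] x = r := by
  rw [hitTime, dif_pos h]
  exact Nat.find_spec h

theorem iterate_ne_of_lt_hitTime (h : ∃ k, f^[k] x = r) {k : ℕ} (hk : k < hitTime f r x) :
    f^[k] x ≠ r := by
  rw [hitTime, dif_pos h] at hk
  exact Nat.find_min h hk

theorem hitTime_le {k : ℕ} (hk : f^[k] x = r) : hitTime f r x ≤ k := by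
  rw [hitTime, dif_pos ⟨k, hk⟩]
  exact Nat.find_le hk

theorem hitTime_self : hitTime f x x = 0 :=
  Nat.le_zero.mp (hitTime_le (k := 0) rfl)

theorem hitTime_eq_hitTime_apply_add_one (h : ∃ k, f^[k] x = r) (hx : x ≠ r) :
    hitTime f r x = hitTime f r (f x) + 1 := by
  have h' : ∃ k, f^[k] (f x) = r := by
    obtain ⟨k, hk⟩ := h
    cases k with
    | zero => exact absurd hk hx
    | succ k => exact ⟨k, hk⟩
  rw [hitTime, hitTime, dif_pos h, dif_pos h']
  exact Nat.find_comp_succ h h' hx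

theorem injOn_iterate_hitTime (h : ∃ k, f^[k] x = r) :
    Set.InjOn (f^[·] x) (Set.Iic (hitTime f r x)) := by
  suffices ∀ a b, a < b → b ≤ hitTime f r x → f^[a] x ≠ f^[b] x by
    intro a ha b hb hab
    by_contra hne
    rcases Nat.lt_or_gt_of_ne hne with hlt | hlt
    · exact this a b hlt hb hab
    · exact this b a hlt ha hab.symm
  intro a b hab hb heq
  apply iterate_ne_of_lt_hitTime h (k := hitTime f r x - b + a) (by omega)
  rw [Function.iterate_add_apply, heq, ← Function.iterate_add_apply, Nat.sub_add_cancel hb,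
    iterate_hitTime h]

theorem hitTime_lt_card [Fintype α] (h : ∃ k, f^[k] x = r) : hitTime f r x < Fintype.card α := by
  have := card_le_card_of_injOn (f^[·] x) (s := range (hitTime f r x + 1))
    (t := univ) (fun _ _ => mem_coe.mpr (mem_univ _))
    (fun a ha b hb => injOn_iterate_hitTime h (by simpa [Nat.lt_succ_iff] using ha)
      (by simpa [Nat.lt_succ_iff] using hb))
  simpa [Nat.succ_le_iff] using this

end HitTime

theorem finsum_mem_sum_filter_mul {α β R : Type*} [DecidableEq β] [CommSemiring R]
    (s : Finset α) (f : α → β) {S : Set β} (hf : ∀ x ∈ s, f x ∈ S) (a : α → R) (g : β → R) :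
    ∑ᶠ m ∈ S, (∑ x ∈ s with f x = m, a x) * g m = ∑ x ∈ s, a x * g (f x) := by
  rw [finsum_mem_eq_sum_of_subset _ (t := s.image f)]
  · refine sum_image' _ fun x _ => ?_
    rw [sum_mul]
    exact sum_congr rfl fun y hy => by rw [(mem_filter.mp hy).2]
  · rintro m ⟨-, hm⟩
    obtain ⟨x, hx, -⟩ := exists_ne_zero_of_sum_ne_zero (left_ne_zero_of_mul hm)
    obtain ⟨hxs, rfl⟩ := mem_filter.mp hx
    exact mem_coe.mpr (mem_image_of_mem f hxs)
  · simpa [Set.subset_def] using hf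

theorem List.zip_tail_map_range {α : Type*} (f : ℕ → α) (k : ℕ) :
    ((List.range (k + 1)).map f).zip ((List.range (k + 1)).map f).tail =
      (List.range k).map fun m => (f m, f (m + 1)) := by
  apply List.ext_getElem <;> simp

section TreePath

variable {n : ℕ} {ℓ : Fin n → Fin n → ℝ} {t : Fin n → Fin n} {r i v : Fin n}

theorem treePathAux_eq_map_range (fuel : ℕ) (h : ∃ k, t^[k] i = r)
    (hfuel : hitTime t r i ≤ fuel) :
    treePathAux t r fuel i = (List.range (hitTime t r i + 1)).map (t^[·] i) := by
  induction fuel generalizing i with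
  | zero => simp [treePathAux, Nat.le_zero.mp hfuel]
  | succ fuel ih =>
    by_cases hi : i = r
    · subst hi
      simp [treePathAux, hitTime_self]
    obtain ⟨k, hk⟩ := h
    have h' : ∃ k, t^[k] (t i) = r := ⟨k - 1, by
      rw [← Function.iterate_succ_apply, Nat.succ_eq_add_one, Nat.sub_add_cancel
        (Nat.pos_of_ne_zero fun hk0 => hi (by simpa [hk0] using hk))]
      exact hk⟩
    have hsucc := hitTime_eq_hitTime_apply_add_one ⟨k, hk⟩ hi
    rw [treePathAux, if_neg hi, ih h' (by omega), hsucc, List.range_succ_eq_map]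
    simp [Function.comp_def]

theorem treePath_eq_map_range (h : ∃ k, t^[k] i = r) :
    treePath t r i = (List.range (hitTime t r i + 1)).map (t^[·] i) :=
  treePathAux_eq_map_range n h (by simpa using (hitTime_lt_card h).le)

theorem treePath_zip_tail (h : ∃ k, t^[k] i = r) :
    (treePath t r i).zip (treePath t r i).tail =
      (List.range (hitTime t r i)).map fun m => (t^[m] i, t^[m + 1] i) := by
  rw [treePath_eq_map_range h, List.zip_tail_map_range]

theorem mem_treePath (h : ∃ k, t^[k] i = r) :
    v ∈ treePath t r i ↔ ∃ m ≤ hitTime t r i, t^[m] i = v := by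
  simp only [treePath_eq_map_range h, List.mem_map, List.mem_range, Nat.lt_succ_iff]

theorem IsSpanningTree.isEdge_iterate (ht : IsSpanningTree ℓ r t) {m : ℕ}
    (hm : m < hitTime t r i) : IsEdge ℓ (t^[m] i) (t^[m + 1] i) := by
  rw [Function.iterate_succ_apply']
  exact ht.2.1 _ (iterate_ne_of_lt_hitTime (ht.2.2 i) hm)

theorem IsSpanningTree.isMinPathFrom_treePath (ht : IsSpanningTree ℓ r t) (i : Fin n) :
    IsMinPathFrom ℓ i r (treePath t r i) := by
  have h := ht.2.2 i
  rw [treePath_eq_map_range h]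
  refine ⟨⟨?_, by simp [List.range_succ_eq_map], ?_⟩, ?_⟩
  · rw [List.Chain', List.isChain_map, List.isChain_range_succ]
    exact fun m hm => ht.isEdge_iterate hm
  · simp [List.range_succ, iterate_hitTime h]
  · exact List.Nodup.map_on (fun a ha b hb => injOn_iterate_hitTime h
      (by simpa [Nat.lt_succ_iff] using ha) (by simpa [Nat.lt_succ_iff] using hb)) List.nodup_range

end TreePath

section ReverseTree

variable {n : ℕ} {ℓ : Fin n → Fin n → ℝ} {t : Fin n → Fin n} {r j v : Fin n}

theorem reverseTree_iterate_succ (h : ∃ k, t^[k] j = r) {m : ℕ} (hm : m < hitTime t r j) :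
    reverseTree t r j (t^[m + 1] j) = t^[m] j := by
  have hfind : (List.range (hitTime t r j)).find? (fun a => t^[a + 1] j == t^[m + 1] j) =
      some m := by
    rw [List.find?_congr (p₂ := (· == m)) fun a ha => by
      have := injOn_iterate_hitTime h (x₁ := a + 1) (x₂ := m + 1)
        (Nat.succ_le_of_lt (List.mem_range.mp ha)) (Nat.succ_le_of_lt hm)
      simp only [beq_eq_decide, decide_eq_decide]
      exact ⟨fun e => by have := this e; omega, fun e => by rw [e]⟩]
    simpa [List.find?_eq_some_iff_getElem, hm] using fun _ h => h.ne
  simp only [reverseTree, treePath_zip_tail h, List.find?_map, Function.comp_def, hfind]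
  rfl

theorem reverseTree_of_forall_ne (h : ∃ k, t^[k] j = r)
    (hv : ∀ m < hitTime t r j, t^[m + 1] j ≠ v) :
    reverseTree t r j v = if v = j then j else t v := by
  have hnone : ((List.range (hitTime t r j)).map fun m => (t^[m] j, t^[m + 1] j)).find?
      (fun e => e.2 == v) = none :=
    List.find?_eq_none.mpr fun e he => by
      obtain ⟨m, hm, rfl⟩ := List.mem_map.mp he
      simpa using hv m (List.mem_range.mp hm)
  simp only [reverseTree, treePath_zip_tail h, hnone, Option.elim_none]

theorem reverseTree_self (h : ∃ k, t^[k] j = r) : reverseTree t r j j = j := by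
  rw [reverseTree_of_forall_ne h fun m hm hj => ?_, if_pos rfl]
  have := injOn_iterate_hitTime h (x₁ := m + 1) (x₂ := 0) (Nat.succ_le_of_lt hm)
    (Nat.zero_le _) (by simpa using hj)
  omega

theorem reverseTree_of_not_mem (h : ∃ k, t^[k] j = r) (hv : v ∉ treePath t r j) :
    reverseTree t r j v = t v := by
  rw [mem_treePath h] at hv
  simp only [not_exists, not_and] at hv
  rw [reverseTree_of_forall_ne h fun m hm => hv (m + 1) hm,
    if_neg fun hvj => hv 0 (Nat.zero_le _) hvj.symm]

theorem reverseTree_iterate_root (h : ∃ k, t^[k] j = r) {m : ℕ} (hm : m ≤ hitTime t r j) :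
    (reverseTree t r j)^[m] r = t^[hitTime t r j - m] j := by
  induction m with
  | zero => exact (iterate_hitTime h).symm
  | succ m ih =>
    rw [Function.iterate_succ_apply', ih (by omega), show hitTime t r j - m =
      hitTime t r j - (m + 1) + 1 by omega, reverseTree_iterate_succ h (by omega)]

theorem iterate_reverseTree_iterate (h : ∃ k, t^[k] j = r) {m : ℕ} (hm : m ≤ hitTime t r j) :
    (reverseTree t r j)^[m] (t^[m] j) = j := by
  rw [← Nat.sub_sub_self hm, ← reverseTree_iterate_root h (Nat.sub_le _ _),
    ← Function.iterate_add_apply, Nat.sub_sub_self hm, Nat.add_sub_cancel' hm,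
    reverseTree_iterate_root h le_rfl, Nat.sub_self, Function.iterate_zero_apply]

theorem iterate_hitTime_reverseTree (h : ∃ k, t^[k] j = r) :
    (reverseTree t r j)^[hitTime t r j] r = j := by
  simpa [iterate_hitTime h] using iterate_reverseTree_iterate h le_rfl

theorem hitTime_reverseTree (h : ∃ k, t^[k] j = r) :
    hitTime (reverseTree t r j) j r = hitTime t r j := by
  have hj := iterate_hitTime_reverseTree h
  refine le_antisymm (hitTime_le hj) (not_lt.mp fun hlt => ?_)
  have := injOn_iterate_hitTime h (x₁ := hitTime t r j - hitTime (reverseTree t r j) j r)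
    (x₂ := 0) (Nat.sub_le _ _) (Nat.zero_le _)
    (by beta_reduce; rw [← reverseTree_iterate_root h hlt.le, iterate_hitTime ⟨_, hj⟩]; rfl)
  omega

theorem reverseTree_iterate_of_forall_not_mem (h : ∃ k, t^[k] j = r) {w : Fin n} {k : ℕ}
    (hk : ∀ i < k, t^[i] w ∉ treePath t r j) : (reverseTree t r j)^[k] w = t^[k] w := by
  induction k with
  | zero => rfl
  | succ k ih =>
    rw [Function.iterate_succ_apply', Function.iterate_succ_apply',
      ih fun i hi => hk i (by omega), reverseTree_of_not_mem h (hk k (by omega))]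

/-- Reversing the path from `j` to `r` makes a tree rooted at `j`: every vertex first follows
`t` until it meets the path, and then runs back along it to `j`. -/
theorem isSpanningTree_reverseTree (ht : IsSpanningTree ℓ r t) (hrev : Reversible ℓ)
    (j : Fin n) : IsSpanningTree ℓ j (reverseTree t r j) := by
  have h := ht.2.2 j
  have hr : r ∈ treePath t r j := (mem_treePath h).mpr ⟨_, le_rfl, iterate_hitTime h⟩
  refine ⟨reverseTree_self h, fun w hwj => ?_, fun w => ?_⟩
  · by_cases hw : w ∈ treePath t r j
    · obtain ⟨m, hm, rfl⟩ := (mem_treePath h).mp hw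
      obtain ⟨m, rfl⟩ :=
        Nat.exists_eq_add_one_of_ne_zero fun (hm0 : m = 0) => hwj (by rw [hm0]; rfl)
      rw [reverseTree_iterate_succ h hm]
      exact (hrev _ _).mp (ht.isEdge_iterate hm)
    · rw [reverseTree_of_not_mem h hw]
      exact ht.2.1 w fun hwr => hw (hwr ▸ hr)
  · have hmeet : ∃ k, t^[k] w ∈ treePath t r j :=
      (ht.2.2 w).imp fun k (hk : t^[k] w = r) => hk ▸ hr
    obtain ⟨m, hm, hmw⟩ := (mem_treePath h).mp (Nat.find_spec hmeet)
    refine ⟨m + Nat.find hmeet, ?_⟩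
    rw [Function.iterate_add_apply, reverseTree_iterate_of_forall_not_mem h
      fun i hi => Nat.find_min hmeet hi, ← hmw, iterate_reverseTree_iterate h hm]

theorem reverseTree_reverseTree (h : ∃ k, t^[k] j = r) (htr : t r = r) :
    reverseTree (reverseTree t r j) j r = t := by
  have h' : ∃ k, (reverseTree t r j)^[k] r = j := ⟨_, iterate_hitTime_reverseTree h⟩
  funext w
  by_cases hw : w ∈ treePath (reverseTree t r j) j r
  · obtain ⟨m, hm, rfl⟩ := (mem_treePath h').mp hw
    rw [hitTime_reverseTree h] at hm
    cases m with
    | zero => rw [Function.iterate_zero_apply, reverseTree_self h', htr]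
    | succ m =>
      rw [reverseTree_iterate_succ h' (by rw [hitTime_reverseTree h]; omega),
        reverseTree_iterate_root h hm, reverseTree_iterate_root h (by omega),
        ← Function.iterate_succ_apply' t]
      congr 1
      omega
  · have hw' : w ∉ treePath t r j := fun hwt => hw <| by
      obtain ⟨m, hm, rfl⟩ := (mem_treePath h).mp hwt
      refine (mem_treePath h').mpr ⟨hitTime t r j - m, ?_, ?_⟩
      · rw [hitTime_reverseTree h]; omega
      · rw [reverseTree_iterate_root h (Nat.sub_le _ _), Nat.sub_sub_self hm]
    rw [reverseTree_of_not_mem h' hw, reverseTree_of_not_mem h hw']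

end ReverseTree

theorem prod_univ_eq_prod_treePath_mul {n : ℕ} {M : Type*} [CommMonoid M]
    {t : Fin n → Fin n} {r j : Fin n} (h : ∃ k, t^[k] j = r) (g : Fin n → M) :
    ∏ v, g v = (∏ m ∈ range (hitTime t r j + 1), g (t^[m] j)) *
      ∏ v with v ∉ treePath t r j, g v := by
  rw [← prod_filter_mul_prod_filter_not univ (· ∈ treePath t r j)]
  have hpath : univ.filter (· ∈ treePath t r j) = (range (hitTime t r j + 1)).image (t^[·] j) := by
    ext v
    simp [mem_treePath h]
  rw [hpath, prod_image fun a ha b hb => injOn_iterate_hitTime h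
    (by simpa [Nat.lt_succ_iff] using ha) (by simpa [Nat.lt_succ_iff] using hb)]

section TreeWeight

variable {n : ℕ} {ℓ : Fin n → Fin n → ℝ} {t : Fin n → Fin n} {r j : Fin n}

theorem mem_Trees {T : Fin n → Fin n} : T ∈ Trees ℓ r ↔ IsSpanningTree ℓ r T := by
  simp [Trees]

theorem treeWeight_eq_prod_ite : treeWeight ℓ r t = ∏ v, if v ≠ r then ℓ v (t v) else 1 :=
  prod_filter _ _

/-- Reversing the path from `j` to `r` trades its forward edge labels for its backward ones and
leaves all other edges of the tree untouched. -/
theorem treeWeight_reverseTree_mul (h : ∃ k, t^[k] j = r) :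
    treeWeight ℓ j (reverseTree t r j) * ∏ m ∈ range (hitTime t r j), ℓ (t^[m] j) (t^[m + 1] j) =
      treeWeight ℓ r t * ∏ m ∈ range (hitTime t r j), ℓ (t^[m + 1] j) (t^[m] j) := by
  have hj : ∀ m < hitTime t r j, t^[m + 1] j ≠ j := fun m hm hj => by
    have := injOn_iterate_hitTime h (x₁ := m + 1) (x₂ := 0) (Nat.succ_le_of_lt hm)
      (Nat.zero_le _) (by simpa using hj)
    omega
  set C := ∏ v with v ∉ treePath t r j, if v ≠ r then ℓ v (t v) else 1
  have hmem : ∀ {v}, v ∉ treePath t r j → v ≠ j ∧ v ≠ r := fun hv =>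
    ⟨fun hvj => hv ((mem_treePath h).mpr ⟨0, Nat.zero_le _, hvj.symm⟩),
      fun hvr => hv ((mem_treePath h).mpr ⟨_, le_rfl, (iterate_hitTime h).trans hvr.symm⟩)⟩
  have hweight : treeWeight ℓ r t =
      (∏ m ∈ range (hitTime t r j), ℓ (t^[m] j) (t^[m + 1] j)) * C := by
    rw [treeWeight_eq_prod_ite, prod_univ_eq_prod_treePath_mul h, prod_range_succ,
      iterate_hitTime h, if_neg (not_not.mpr rfl), mul_one]
    refine congrArg (· * C) (prod_congr rfl fun m hm => ?_)
    rw [if_pos (iterate_ne_of_lt_hitTime h (mem_range.mp hm)), Function.iterate_succ_apply']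
  have hweight' : treeWeight ℓ j (reverseTree t r j) =
      (∏ m ∈ range (hitTime t r j), ℓ (t^[m + 1] j) (t^[m] j)) * C := by
    rw [treeWeight_eq_prod_ite, prod_univ_eq_prod_treePath_mul h, prod_range_succ',
      Function.iterate_zero_apply, if_neg (not_not.mpr rfl), mul_one]
    congr 1
    · refine prod_congr rfl fun m hm => ?_
      rw [if_pos (hj m (mem_range.mp hm)), reverseTree_iterate_succ h (mem_range.mp hm)]
    · refine prod_congr rfl fun v hv => ?_
      have hv := (mem_filter.mp hv).2
      rw [if_pos (hmem hv).1, if_pos (hmem hv).2, reverseTree_of_not_mem h hv]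
  rw [hweight, hweight']
  ring

theorem exp_neg_pathAction_treePath (h : ∃ k, t^[k] j = r)
    (hpos : ∀ m < hitTime t r j,
      0 < ℓ (t^[m] j) (t^[m + 1] j) ∧ 0 < ℓ (t^[m + 1] j) (t^[m] j)) :
    Real.exp (-pathAction ℓ (treePath t r j)) =
      (∏ m ∈ range (hitTime t r j), ℓ (t^[m + 1] j) (t^[m] j)) /
        ∏ m ∈ range (hitTime t r j), ℓ (t^[m] j) (t^[m + 1] j) := by
  have hsum : pathAction ℓ (treePath t r j) = ∑ m ∈ range (hitTime t r j),
      Real.log (ℓ (t^[m] j) (t^[m + 1] j) / ℓ (t^[m + 1] j) (t^[m] j)) := by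
    rw [pathAction, treePath_zip_tail h, List.map_map]
    rfl
  rw [hsum, Real.exp_neg, Real.exp_sum, ← prod_inv_distrib, ← prod_div_distrib]
  refine prod_congr rfl fun m hm => ?_
  obtain ⟨hfwd, hbwd⟩ := hpos m (mem_range.mp hm)
  rw [Real.exp_log (div_pos hfwd hbwd), inv_div]

theorem IsSpanningTree.treeWeight_mul_exp_neg_pathAction (ht : IsSpanningTree ℓ r t)
    (hrev : Reversible ℓ) (j : Fin n) :
    treeWeight ℓ r t * Real.exp (-pathAction ℓ (treePath t r j)) =
      treeWeight ℓ j (reverseTree t r j) := by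
  have hfwd : ∀ m < hitTime t r j, 0 < ℓ (t^[m] j) (t^[m + 1] j) := fun _ => ht.isEdge_iterate
  rw [exp_neg_pathAction_treePath (ht.2.2 j) fun m hm => ⟨hfwd m hm, (hrev _ _).mp (hfwd m hm)⟩,
    mul_div_assoc', ← treeWeight_reverseTree_mul (ht.2.2 j),
    mul_div_cancel_right₀ _ (prod_pos fun m hm => hfwd m (mem_range.mp hm)).ne']

theorem sum_treeWeight_mul_exp_neg_pathAction (hrev : Reversible ℓ) (r j : Fin n) :
    ∑ T ∈ Trees ℓ r, treeWeight ℓ r T * Real.exp (-pathAction ℓ (treePath T r j)) =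
      ∑ T ∈ Trees ℓ j, treeWeight ℓ j T :=
  sum_nbij' (reverseTree · r j) (reverseTree · j r)
    (fun _ hT => mem_Trees.mpr (isSpanningTree_reverseTree (mem_Trees.mp hT) hrev j))
    (fun _ hT => mem_Trees.mpr (isSpanningTree_reverseTree (mem_Trees.mp hT) hrev r))
    (fun _ hT => reverseTree_reverseTree ((mem_Trees.mp hT).2.2 j) (mem_Trees.mp hT).1)
    (fun _ hT => reverseTree_reverseTree ((mem_Trees.mp hT).2.2 r) (mem_Trees.mp hT).1)
    (fun _ hT => (mem_Trees.mp hT).treeWeight_mul_exp_neg_pathAction hrev j)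

end TreeWeight

theorem jarzynski_over_minimal_paths_general {n : ℕ} (hn : 0 < n)
    (ℓ : Fin n → Fin n → ℝ) (hrev : Reversible ℓ) (i : Fin n) :
    (∑ᶠ m ∈ {p : List (Fin n) | IsMinPathFrom ℓ i ⟨0, hn⟩ p},
        (∑ T ∈ (Trees ℓ ⟨0, hn⟩).filter (fun T => treePath T ⟨0, hn⟩ i = m),
            treeWeight ℓ ⟨0, hn⟩ T / ∑ T' ∈ Trees ℓ ⟨0, hn⟩, treeWeight ℓ ⟨0, hn⟩ T') *
          Real.exp (-pathAction ℓ m)) =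
      (∑ T ∈ Trees ℓ i, treeWeight ℓ i T) /
        (∑ T ∈ Trees ℓ ⟨0, hn⟩, treeWeight ℓ ⟨0, hn⟩ T) := by
  rw [finsum_mem_sum_filter_mul _ (treePath · ⟨0, hn⟩ i)
      fun T hT => (mem_Trees.mp hT).isMinPathFrom_treePath i,
    ← sum_treeWeight_mul_exp_neg_pathAction hrev ⟨0, hn⟩ i, sum_div]
  exact sum_congr rfl fun T _ => div_mul_eq_mul_div _ _ _

/-- Jarzynski-type identity over minimal paths:
`∑_{m ∈ M(i,1)} Pr(m) · exp (-S(m)) = q(Θ_i) / q(Θ_1)`, the normalized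
steady-state component `ρ_i(G)`. -/
theorem jarzynski_over_minimal_paths {n : ℕ} (hn : 0 < n)
    (ℓ : Fin n → Fin n → ℝ) (hℓ : ∀ i j, 0 ≤ ℓ i j)
    (hsc : StronglyConnected ℓ) (hrev : Reversible ℓ) (i : Fin n) :
    (∑ᶠ m ∈ {p : List (Fin n) | IsMinPathFrom ℓ i ⟨0, hn⟩ p},
        (∑ T ∈ (Trees ℓ ⟨0, hn⟩).filter (fun T => treePath T ⟨0, hn⟩ i = m),
            treeWeight ℓ ⟨0, hn⟩ T / ∑ T' ∈ Trees ℓ ⟨0, hn⟩, treeWeight ℓ ⟨0, hn⟩ T') *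
          Real.exp (-pathAction ℓ m)) =
      (∑ T ∈ Trees ℓ i, treeWeight ℓ i T) /
        (∑ T ∈ Trees ℓ ⟨0, hn⟩, treeWeight ℓ ⟨0, hn⟩ T) :=
  jarzynski_over_minimal_paths_general hn ℓ hrev i
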